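/- Let p be a prime, u, m, n natural numbers with p ∤ u, m ≥ 2 if p = 2, n ≥ m, and set k = 1 + u·p^m. Let ε = 1 if p = 2 and ε = 0 if p is odd. Then for every non-negative integer i with i ≡ 1 (mod p^{n−m+ε}), one has S(k,i) ≡ i (mod p^n). -/

import Mathlib

/-!
Write `k = x + 1` with `p ^ m ∣ x`. Since `S (x+1) n - n = x * ∑_{t<n} S (x+1) t` and the sum is
`≡ n (n-1) / 2 (mod p)`, one gets `S (x+1) p ≡ p (mod p^(m+1-ε))`; `ε` accounts for `p = 2`, where
`n (n-1) / 2` is not divisible by `p`. As `S k (p^(s+1)) = S (k^(p^s)) p * S k (p^s)` and `k^(p^s)`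
is again `≡ 1 (mod p^m)`, the quotients `S k (p^s) / p^s` multiply up to `≡ 1 (mod p^(m-ε))`, i.e.
`S k (p^s) ≡ p^s (mod p^(s+m-ε))`. For `s = n - m + ε` this gives `S k (p^s) ≡ p^s` and
`k^(p^s) = x * S k (p^s) + 1 ≡ 1 (mod p^n)`, and splitting `i = q p^s + 1` yields
`S k i ≡ q p^s + 1 = i`.
-/

open Finset

/-- `S x i = 1 + x + ⋯ + x^(i-1)`, with `S x 0 = 0`. -/
def S (x i : ℕ) : ℕ := ∑ t ∈ Finset.range i, x ^ t

lemma S_one (k : ℕ) : S k 1 = 1 := by simp [S]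

lemma S_succ (k t : ℕ) : S k (t + 1) = S k t + k ^ t := sum_range_succ _ _

lemma S_add (k a b : ℕ) : S k (a + b) = S k a + k ^ a * S k b := by
  simp [S, sum_range_add, pow_add, mul_sum]

lemma S_mul (k a b : ℕ) : S k (a * b) = S (k ^ b) a * S k b := by
  induction a with
  | zero => simp [S]
  | succ a ih =>
    rw [Nat.succ_mul, S_add, ih, S_succ, add_mul, ← pow_mul, mul_comm b a]

lemma S_mul_add_one (x t : ℕ) : S (x + 1) t * x + 1 = (x + 1) ^ t := geom_sum_mul_add x t

lemma S_modEq_self {k M : ℕ} (hk : k ≡ 1 [MOD M]) (t : ℕ) : S k t ≡ t [MOD M] := by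
  simpa [S] using Nat.ModEq.sum (s := range t) fun s _ => hk.pow s

lemma S_modEq_of_dvd {M x : ℕ} (hx : M ∣ x) (t : ℕ) : S (x + 1) t ≡ t [MOD M] :=
  S_modEq_self (by simpa using (Nat.modEq_zero_iff_dvd.2 hx).add_right 1) t

lemma S_eq_sum_S_mul_add (x n : ℕ) :
    S (x + 1) n = (∑ t ∈ range n, S (x + 1) t) * x + n := by
  rw [S, sum_congr rfl fun t _ => (S_mul_add_one x t).symm, sum_add_distrib, sum_mul]
  simp

lemma S_odd_modEq {n M x : ℕ} (hn : Odd n) (hnM : n ∣ M) (hx : M ∣ x) :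
    S (x + 1) n ≡ n [MOD n * M] := by
  have hsum : n ∣ ∑ t ∈ range n, S (x + 1) t := by
    have hmod : ∑ t ∈ range n, S (x + 1) t ≡ ∑ t ∈ range n, t [MOD n] :=
      Nat.ModEq.sum fun t _ => S_modEq_of_dvd (hnM.trans hx) t
    refine (hmod.dvd_iff dvd_rfl).2 (hn.coprime_two_right.dvd_of_dvd_mul_right ?_)
    rw [sum_range_id_mul_two]
    exact dvd_mul_right n _
  rw [S_eq_sum_S_mul_add]
  simpa using (Nat.modEq_zero_iff_dvd.2 (mul_dvd_mul hsum hx)).add_right n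

lemma S_prime_modEq {p m x : ℕ} (hp : p.Prime) (hm : 0 < m) (hx : p ^ m ∣ x) :
    S (x + 1) p ≡ p [MOD p * p ^ (m - if p = 2 then 1 else 0)] := by
  split_ifs with h2
  · rw [← pow_succ', Nat.sub_add_cancel hm]
    exact S_modEq_of_dvd hx p
  · rw [Nat.sub_zero]
    exact S_odd_modEq (hp.odd_of_ne_two h2) (dvd_pow_self p hm.ne') hx

lemma Nat.ModEq.mul_of_modulus {a b x y M : ℕ} (ha : a ≡ x [MOD x * M])
    (hb : b ≡ y [MOD y * M]) : a * b ≡ x * y [MOD x * y * M] := by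
  rw [Nat.modEq_iff_dvd] at ha hb ⊢
  obtain ⟨c, hc⟩ := ha
  obtain ⟨d, hd⟩ := hb
  push_cast at hc hd ⊢
  refine ⟨c + d - M * c * d, ?_⟩
  rw [show (a : ℤ) = x - x * M * c by linarith, show (b : ℤ) = y - y * M * d by linarith]
  ring

lemma S_pow_modEq {p N M x : ℕ} (hstep : ∀ y, N ∣ y → S (y + 1) p ≡ p [MOD p * M])
    (hx : N ∣ x) (s : ℕ) : S (x + 1) (p ^ s) ≡ p ^ s [MOD p ^ s * M] := by
  induction s with
  | zero => rw [pow_zero, one_mul, S_one]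
  | succ s ih =>
    have hK : (x + 1) ^ p ^ s = S (x + 1) (p ^ s) * x + 1 := (S_mul_add_one x _).symm
    rw [pow_succ', S_mul, hK]
    exact (hstep _ (hx.mul_left _)).mul_of_modulus ih

lemma pow_modEq_one_of_dvd {a b x t : ℕ} (ha : a ∣ S (x + 1) t) (hb : b ∣ x) :
    (x + 1) ^ t ≡ 1 [MOD a * b] := by
  rw [← S_mul_add_one]
  simpa using (Nat.modEq_zero_iff_dvd.2 (mul_dvd_mul ha hb)).add_right 1

lemma S_modEq_self_of_modEq_one {k L N i : ℕ} (hkL : k ^ L ≡ 1 [MOD N])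
    (hSL : S k L ≡ L [MOD N]) (hi : i ≡ 1 [MOD L]) : S k i ≡ i [MOD N] := by
  obtain ⟨q, r, rfl, hr⟩ : ∃ q r, i = q * L + r ∧ r ≤ 1 :=
    ⟨i / L, i % L, (Nat.div_add_mod' i L).symm, hi ▸ Nat.mod_le 1 L⟩
  have hSr : S k r = r := by interval_cases r <;> simp [S]
  rw [S_add, S_mul, pow_mul', hSr]
  simpa using ((S_modEq_self hkL q).mul hSL).add ((hkL.pow q).mul_right r)

theorem stmt_6_general (p u m n : ℕ) (hp : p.Prime) (hm : 0 < m)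
    (hnm : m ≤ n) (k : ℕ) (hk : k = 1 + u * p ^ m)
    (ε : ℕ) (hε : ε = if p = 2 then 1 else 0)
    (i : ℕ) (hi : i ≡ 1 [MOD p ^ (n - m + ε)]) :
    S k i ≡ i [MOD p ^ n] := by
  have hεm : ε ≤ m := by split_ifs at hε <;> omega
  have hx : p ^ m ∣ u * p ^ m := dvd_mul_left _ _
  rw [add_comm] at hk
  subst hk
  have hSe : S (u * p ^ m + 1) (p ^ (n - m + ε)) ≡ p ^ (n - m + ε) [MOD p ^ n] := by
    have := S_pow_modEq (fun y hy => S_prime_modEq hp hm hy) hx (n - m + ε)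
    rwa [← hε, ← pow_add, show n - m + ε + (m - ε) = n by omega] at this
  have hke : (u * p ^ m + 1) ^ p ^ (n - m + ε) ≡ 1 [MOD p ^ n] := by
    have hdvd : p ^ (n - m) ∣ S (u * p ^ m + 1) (p ^ (n - m + ε)) :=
      (hSe.dvd_iff (pow_dvd_pow p (by omega))).2 (pow_dvd_pow p (by omega))
    simpa only [← pow_add, Nat.sub_add_cancel hnm] using pow_modEq_one_of_dvd hdvd hx
  exact S_modEq_self_of_modEq_one hke hSe hi

theorem stmt_6 (p u m n : ℕ) (hp : p.Prime) (hu : ¬ p ∣ u) (hm : 0 < m)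
    (hp2 : p = 2 → 2 ≤ m) (hnm : m ≤ n) (k : ℕ) (hk : k = 1 + u * p ^ m)
    (ε : ℕ) (hε : ε = if p = 2 then 1 else 0)
    (i : ℕ) (hi : i ≡ 1 [MOD p ^ (n - m + ε)]) :
    S k i ≡ i [MOD p ^ n] :=
  stmt_6_general p u m n hp hm hnm k hk ε hε i hi
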